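/- arXiv:1705.09046 — 4 statements merged into one kernel-verified Lean document; each statement's English description precedes it below -/
import Mathlib

section
/- The one-dimensional Student-t distribution is a member of the t-exponential family: let v > 0, μ ∈ ℝ, σ > 0, and set t = 1 + 2/(v+1) (so that 1/(1−t) = −(v+1)/2), K = (vσ²)^{-1}, Ψ = (Γ((v+1)/2) / ((πv)^{1/2} Γ(v/2) σ))^{1−t}. Then for every x ∈ ℝ, (Γ((v+1)/2) / ((πv)^{1/2} Γ(v/2) σ)) · (1 + (x−μ)²/(vσ²))^{−(v+1)/2} = exp_t( (Ψ/(1−t))(Kx² − 2μKx) − g ), where g = −(Ψ/(1−t))(Kμ² + 1) + 1/(1−t), and the argument of exp_t satisfies the positivity condition 1 + (1−t)((Ψ/(1−t))(Kx² − 2μKx) − g) > 0. -/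
open Real

/-- The deformed exponential: `exp_t(x) = (1 + (1-t)x)^(1/(1-t))`. -/
noncomputable def dexp (t x : ℝ) : ℝ := (1 + (1 - t) * x) ^ (1 / (1 - t))

/-- The one-dimensional Student-t distribution is a member of the t-exponential family. -/
theorem studentT_mem_texp_family (v μ σ t K Ψ g : ℝ)
    (hv : 0 < v) (hσ : 0 < σ)
    (ht : t = 1 + 2 / (v + 1))
    (hK : K = (v * σ ^ 2)⁻¹)
    (hΨ : Ψ = (Real.Gamma ((v + 1) / 2) /
        ((π * v) ^ ((1 : ℝ) / 2) * Real.Gamma (v / 2) * σ)) ^ (1 - t))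
    (hg : g = -(Ψ / (1 - t)) * (K * μ ^ 2 + 1) + 1 / (1 - t)) :
    ∀ x : ℝ,
      Real.Gamma ((v + 1) / 2) / ((π * v) ^ ((1 : ℝ) / 2) * Real.Gamma (v / 2) * σ) *
          (1 + (x - μ) ^ 2 / (v * σ ^ 2)) ^ (-(v + 1) / 2)
        = dexp t ((Ψ / (1 - t)) * (K * x ^ 2 - 2 * μ * K * x) - g) ∧
      0 < 1 + (1 - t) * ((Ψ / (1 - t)) * (K * x ^ 2 - 2 * μ * K * x) - g) := by
  intro x
  set C : ℝ := Real.Gamma ((v + 1) / 2) / ((π * v) ^ ((1 : ℝ) / 2) * Real.Gamma (v / 2) * σ)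
    with hC
  have hv1 : (0:ℝ) < v + 1 := by linarith
  have hC0 : 0 < C := by
    apply div_pos (Real.Gamma_pos_of_pos (by positivity))
    have : (0:ℝ) < (π * v) ^ ((1:ℝ)/2) := Real.rpow_pos_of_pos (by positivity) _
    have := Real.Gamma_pos_of_pos (show (0:ℝ) < v / 2 by positivity)
    positivity
  have h1t : 1 - t = -(2 / (v + 1)) := by rw [ht]; ring
  have hne : 1 - t ≠ 0 := by
    rw [h1t]; exact neg_ne_zero.mpr (by positivity)
  have hvs : v * σ ^ 2 ≠ 0 := by positivity
  have hΨ0 : 0 < Ψ := by rw [hΨ]; exact Real.rpow_pos_of_pos hC0 _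
  have hbase : (0:ℝ) < 1 + (x - μ) ^ 2 / (v * σ ^ 2) := by positivity
  have harg : 1 + (1 - t) * ((Ψ / (1 - t)) * (K * x ^ 2 - 2 * μ * K * x) - g)
      = Ψ * (1 + (x - μ) ^ 2 / (v * σ ^ 2)) := by
    subst hg hK
    field_simp
    ring
  have hinv : 1 / (1 - t) = -(v + 1) / 2 := by
    rw [h1t]
    field_simp
  constructor
  · rw [dexp, harg, hΨ,
      Real.mul_rpow (Real.rpow_nonneg hC0.le _) hbase.le,
      ← Real.rpow_mul hC0.le, mul_one_div, div_self hne, Real.rpow_one, hinv]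
  · rw [harg]
    positivity
end

section
/- Integral of an unnormalized one-dimensional Student-t-type deformed exponential (Theorem 2, one-dimensional case): let v > 0, μ ∈ ℝ, σ > 0, set t = 1 + 2/(v+1), K = (vσ²)^{-1}, Ψ = (Γ((v+1)/2) / ((πv)^{1/2} Γ(v/2) σ))^{1−t}, and g_t = −(Ψ/(1−t))(Kμ² + 1) + 1/(1−t). Let g ∈ ℝ be a constant such that A := 1 − ΨKμ² − (1−t)g > 0. Then ∫_ℝ (1 + Ψ(Kw² − 2μKw) − (1−t)g)^{1/(1−t)} dw = ( exp_t( g_t/Ψ − g/Ψ ) )^{(3−t)/2}, where the argument of exp_t satisfies 1 + (1−t)(g_t − g)/Ψ > 0. -/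
open Real MeasureTheory Set

lemma base_integral {p : ℝ} (hp : 1/2 < p) :
    ∫ x : ℝ, (1 + x^2) ^ (-p) = √π * Real.Gamma (p - 1/2) / Real.Gamma p := by
  have hp0 : 0 < p := by linarith
  have hΓ : 0 < Real.Gamma p := Real.Gamma_pos_of_pos hp0
  set F : ℝ → ℝ → ℝ := fun t x => t ^ (p-1) * (rexp (-t) * rexp (-(t*x^2))) with hF
  have key : ∀ t ∈ Ioi (0:ℝ), (∫ x : ℝ, F t x) = √π * (rexp (-t) * t ^ (p - 1/2 - 1)) := by
    intro t ht
    have ht' : (0:ℝ) < t := ht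
    have h2 : (∫ x : ℝ, F t x) = t ^ (p-1) * rexp (-t) * ∫ x : ℝ, rexp (-t * x^2) := by
      rw [← integral_const_mul]
      congr 1; funext x; simp only [hF, neg_mul]; ring
    have h3 : t ^ (p-1) / t ^ (1/2 : ℝ) = t ^ (p - 1/2 - 1) := by
      rw [← Real.rpow_sub ht']; ring_nf
    rw [h2, integral_gaussian, Real.sqrt_div pi_pos.le, Real.sqrt_eq_rpow t,
      show t ^ (p-1) * rexp (-t) * (√π / t ^ (1/2:ℝ))
        = √π * (rexp (-t) * (t ^ (p-1) / t ^ (1/2:ℝ))) by ring, h3]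
  have hmeas : AEStronglyMeasurable (Function.uncurry F)
      ((volume.restrict (Ioi (0:ℝ))).prod volume) := by
    apply Measurable.aestronglyMeasurable
    unfold Function.uncurry
    fun_prop
  have hint : Integrable (Function.uncurry F)
      ((volume.restrict (Ioi (0:ℝ))).prod volume) := by
    rw [integrable_prod_iff hmeas]
    constructor
    · rw [ae_restrict_iff' measurableSet_Ioi]
      filter_upwards with t ht
      have := (integrable_exp_neg_mul_sq ht).const_mul (t ^ (p-1) * rexp (-t))
      simpa [hF, neg_mul, mul_assoc] using this
    · have hig : IntegrableOn (fun t : ℝ => √π * (rexp (-t) * t ^ (p - 1/2 - 1))) (Ioi 0) :=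
        (Real.GammaIntegral_convergent (by linarith : 0 < p - 1/2)).const_mul √π
      apply IntegrableOn.congr_fun hig ?_ measurableSet_Ioi
      intro t ht
      have ht' : (0:ℝ) < t := ht
      have h1 : (∫ x : ℝ, ‖F t x‖) = ∫ x : ℝ, F t x := by
        congr 1; funext x
        exact norm_of_nonneg (by positivity)
      show √π * (rexp (-t) * t ^ (p - 1/2 - 1)) = ∫ x : ℝ, ‖F t x‖
      rw [h1, key t ht]
  have swap := integral_integral_swap hint
  have lhs : (∫ t in Ioi (0:ℝ), ∫ x : ℝ, F t x) = √π * Real.Gamma (p - 1/2) := by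
    rw [setIntegral_congr_fun measurableSet_Ioi key, integral_const_mul,
      ← Real.Gamma_eq_integral (by linarith : 0 < p - 1/2)]
  have rhs : (∫ x : ℝ, ∫ t in Ioi (0:ℝ), F t x) = (∫ x : ℝ, (1 + x^2) ^ (-p)) * Real.Gamma p := by
    rw [← integral_mul_const]
    congr 1; funext x
    have hx : (0:ℝ) < 1 + x^2 := by positivity
    have h4 : (∫ t in Ioi (0:ℝ), F t x)
        = ∫ t in Ioi (0:ℝ), t ^ (p-1) * rexp (-((1+x^2)*t)) := by
      congr 1; funext t
      have harg : -t + -(t*x^2) = -((1+x^2)*t) := by ring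
      rw [hF]; dsimp only; rw [← Real.exp_add, harg]
    rw [h4, integral_rpow_mul_exp_neg_mul_Ioi hp0 hx, one_div,
      Real.inv_rpow hx.le, ← Real.rpow_neg hx.le]
  rw [lhs, rhs] at swap
  rw [eq_div_iff hΓ.ne']
  linarith [swap]

lemma shifted_integral {p c A m : ℝ} (hp : 1/2 < p) (hc : 0 < c) (hA : 0 < A) :
    ∫ x : ℝ, (c*(x-m)^2 + A) ^ (-p)
      = A ^ (1/2 - p) * c ^ (-(1/2:ℝ)) * (√π * Real.Gamma (p - 1/2) / Real.Gamma p) := by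
  have h0 : (∫ x : ℝ, (c*(x-m)^2 + A) ^ (-p)) = ∫ x : ℝ, (c*x^2 + A) ^ (-p) :=
    integral_sub_right_eq_self (fun x => (c*x^2 + A) ^ (-p)) m
  set b : ℝ := √(c/A) with hb
  have hb0 : 0 < b := Real.sqrt_pos.mpr (by positivity)
  have hpt : ∀ x : ℝ, (c*x^2 + A) ^ (-p) = A ^ (-p) * (1 + (b*x)^2) ^ (-p) := by
    intro x
    have h1 : (b*x)^2 = (c/A) * x^2 := by
      rw [mul_pow, hb, Real.sq_sqrt (by positivity)]
    have h2 : c*x^2 + A = A * (1 + (b*x)^2) := by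
      rw [h1]; field_simp; ring
    rw [h2, Real.mul_rpow hA.le (by positivity)]
  have h3 : (∫ x : ℝ, (c*x^2 + A) ^ (-p))
      = A ^ (-p) * (b⁻¹ * ∫ x : ℝ, (1 + x^2) ^ (-p)) := by
    simp_rw [hpt]
    rw [integral_const_mul]
    congr 1
    rw [MeasureTheory.Measure.integral_comp_mul_left (fun x => (1 + x^2) ^ (-p)) b,
      abs_of_pos (inv_pos.mpr hb0), smul_eq_mul]
  have h4 : A ^ (-p) * b⁻¹ = A ^ (1/2 - p) * c ^ (-(1/2:ℝ)) := by
    rw [hb, ← Real.sqrt_inv, inv_div, Real.sqrt_div hA.le, Real.sqrt_eq_rpow A,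
      Real.sqrt_eq_rpow c, div_eq_mul_inv, ← Real.rpow_neg hc.le, ← mul_assoc,
      ← Real.rpow_add hA]
    ring_nf
  rw [h0, h3, base_integral hp, ← mul_assoc, h4]

/-- Integral of an unnormalized one-dimensional Student-t-type deformed exponential
(Theorem 2, one-dimensional case). -/
theorem integral_unnormalized_studentT (v μ σ t K Ψ gt g : ℝ)
    (hv : 0 < v) (hσ : 0 < σ)
    (ht : t = 1 + 2 / (v + 1))
    (hK : K = (v * σ ^ 2)⁻¹)
    (hΨ : Ψ = (Real.Gamma ((v + 1) / 2) /
        ((π * v) ^ ((1 : ℝ) / 2) * Real.Gamma (v / 2) * σ)) ^ (1 - t))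
    (hgt : gt = -(Ψ / (1 - t)) * (K * μ ^ 2 + 1) + 1 / (1 - t))
    (hA : 0 < 1 - Ψ * K * μ ^ 2 - (1 - t) * g) :
    (∫ w : ℝ, (1 + Ψ * (K * w ^ 2 - 2 * μ * K * w) - (1 - t) * g) ^ (1 / (1 - t)))
        = dexp t (gt / Ψ - g / Ψ) ^ ((3 - t) / 2) ∧
      0 < 1 + (1 - t) * (gt / Ψ - g / Ψ) := by
  have hv1 : (0:ℝ) < v + 1 := by linarith
  have hs : 1 - t = -(2/(v+1)) := by rw [ht]; ring
  have hsne : 1 - t ≠ 0 := by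
    rw [hs]; have : (0:ℝ) < 2/(v+1) := by positivity
    linarith
  have hq : 1/(1-t) = -((v+1)/2) := by rw [hs]; field_simp
  have hp : (1:ℝ)/2 < (v+1)/2 := by linarith
  have hΓ1 : 0 < Real.Gamma ((v+1)/2) := Real.Gamma_pos_of_pos (by linarith)
  have hΓ2 : 0 < Real.Gamma (v/2) := Real.Gamma_pos_of_pos (by linarith)
  have hc : 0 < Real.Gamma ((v + 1) / 2) /
      ((π * v) ^ ((1 : ℝ) / 2) * Real.Gamma (v / 2) * σ) := by
    have h1 : (0:ℝ) < (π * v) ^ ((1:ℝ)/2) := Real.rpow_pos_of_pos (by positivity) _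
    positivity
  have hΨ0 : 0 < Ψ := hΨ ▸ Real.rpow_pos_of_pos hc _
  have hK0 : 0 < K := by rw [hK]; positivity
  set A : ℝ := 1 - Ψ * K * μ ^ 2 - (1 - t) * g with hAdef
  have hX : 1 + (1-t) * (gt/Ψ - g/Ψ) = A/Ψ := by
    rw [hgt, hAdef]
    field_simp
    ring
  have hAΨ : 0 < A/Ψ := by positivity
  refine ⟨?_, by rw [hX]; exact hAΨ⟩
  -- LHS
  have hL : (∫ w : ℝ, (1 + Ψ * (K * w ^ 2 - 2 * μ * K * w) - (1 - t) * g) ^ (1 / (1 - t)))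
      = ∫ w : ℝ, ((Ψ*K)*(w-μ)^2 + A) ^ (-((v+1)/2)) := by
    congr 1; funext w
    rw [hq]; congr 1; rw [hAdef]; ring
  rw [hL, shifted_integral hp (by positivity) hA]
  -- RHS
  have hR : dexp t (gt / Ψ - g / Ψ) ^ ((3 - t) / 2) = (A/Ψ) ^ ((1:ℝ)/2 - (v+1)/2) := by
    unfold dexp
    rw [hX, hq, ← Real.rpow_mul hAΨ.le]
    congr 1
    rw [ht]; field_simp; ring
  rw [hR, Real.div_rpow hA.le hΨ0.le]
  have hps : (v+1)/2 - (1:ℝ)/2 = v/2 := by ring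
  rw [hps, div_eq_mul_inv (A ^ ((1:ℝ)/2 - (v+1)/2)) (Ψ ^ ((1:ℝ)/2 - (v+1)/2)), mul_assoc]
  congr 1
  have einv : (Ψ ^ ((1:ℝ)/2 - (v+1)/2))⁻¹ = Ψ ^ (v/2) := by
    rw [← Real.rpow_neg hΨ0.le]; congr 1; ring
  rw [einv]
  -- scalar identity
  have e2 : (Ψ*K) ^ (-(1/2:ℝ)) = Ψ ^ (-(1/2:ℝ)) * K ^ (-(1/2:ℝ)) :=
    Real.mul_rpow hΨ0.le hK0.le
  have e3 : K ^ (-(1/2:ℝ)) = v ^ ((1:ℝ)/2) * σ := by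
    rw [hK, Real.inv_rpow (by positivity), ← Real.rpow_neg (by positivity), neg_neg,
      Real.mul_rpow hv.le (by positivity), ← Real.rpow_natCast σ 2, ← Real.rpow_mul hσ.le]
    norm_num
  have e1 : Ψ ^ (v/2) = Ψ ^ ((v+1)/2) * Ψ ^ (-(1/2:ℝ)) := by
    rw [← Real.rpow_add hΨ0]; congr 1; ring
  have hΨpow : Ψ ^ ((v+1)/2) = ((π*v) ^ ((1:ℝ)/2) * Real.Gamma (v/2) * σ) /
      Real.Gamma ((v+1)/2) := by
    rw [hΨ, ← Real.rpow_mul hc.le,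
      show (1-t)*((v+1)/2) = (-1:ℝ) by rw [hs]; field_simp,
      Real.rpow_neg_one, inv_div]
  have e4 : (π*v) ^ ((1:ℝ)/2) = √π * v ^ ((1:ℝ)/2) := by
    rw [Real.mul_rpow pi_pos.le hv.le, Real.sqrt_eq_rpow]
  have hΨne : Ψ ^ (-(1/2:ℝ)) ≠ 0 := (Real.rpow_pos_of_pos hΨ0 _).ne'
  rw [e2, e3, e1, hΨpow, e4]
  field_simp
end

section
/- Marginal likelihood expression for the t-exponential family EP approximation (one-dimensional case): let v > 0, μ ∈ ℝ, σ > 0, set t = 1 + 2/(v+1), K = (vσ²)^{-1}, Ψ = (Γ((v+1)/2) / ((πv)^{1/2} Γ(v/2) σ))^{1−t}, and g_t = −(Ψ/(1−t))(Kμ² + 1) + 1/(1−t). Let c ∈ ℝ and g₀ ∈ ℝ be constants such that 1 + (1−t)c − ΨKμ² − (1−t)g₀ > 0. Then ∫_ℝ exp_t( c + (Ψ/(1−t))(Kw² − 2μKw) − g₀ ) dw = ( exp_t( c/Ψ + g_t/Ψ − g₀/Ψ ) )^{(3−t)/2}. -/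
open Real MeasureTheory Set

lemma student_integral {s : ℝ} (hs : 1 / 2 < s) :
    ∫ x : ℝ, (1 + x ^ 2) ^ (-s) = Real.sqrt π * Real.Gamma (s - 1 / 2) / Real.Gamma s := by
  have hs0 : 0 < s := by linarith
  have hs2 : 0 < s - 1 / 2 := by linarith
  have h1x : ∀ x : ℝ, (0:ℝ) < 1 + x ^ 2 := fun x => by positivity
  set f : ℝ → ℝ → ℝ := fun u x => u ^ (s - 1) * Real.exp (-((1 + x ^ 2) * u)) with hf
  -- pointwise in x : the u-integral gives Gamma
  have key : ∀ x : ℝ, ∫ u in Ioi (0:ℝ), f u x = (1 + x ^ 2) ^ (-s) * Real.Gamma s := by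
    intro x
    rw [hf]
    simp only
    rw [Real.integral_rpow_mul_exp_neg_mul_Ioi hs0 (h1x x), one_div,
      Real.inv_rpow (h1x x).le, ← Real.rpow_neg (h1x x).le]
  -- for fixed u > 0, factor the integrand
  have hsplit : ∀ (u : ℝ), 0 < u → ∀ x : ℝ,
      f u x = (u ^ (s - 1) * Real.exp (-u)) * Real.exp (-u * x ^ 2) := by
    intro u hu x
    rw [hf]
    simp only
    rw [mul_assoc, ← Real.exp_add]
    ring_nf
  -- inner x-integral
  have inner : ∀ u ∈ Ioi (0:ℝ), (∫ x : ℝ, f u x)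
      = Real.sqrt π * (Real.exp (-u) * u ^ (s - 1 / 2 - 1)) := by
    intro u hu
    rw [mem_Ioi] at hu
    simp_rw [hsplit u hu]
    rw [integral_const_mul, integral_gaussian u,
      show π / u = π * u⁻¹ by ring, Real.sqrt_mul Real.pi_nonneg, Real.sqrt_inv,
      Real.sqrt_eq_rpow u, ← Real.rpow_neg hu.le,
      show s - 1 / 2 - 1 = (s - 1) + (-(1/2)) by ring, Real.rpow_add hu]
    ring
  -- measurability
  have hmeas : AEStronglyMeasurable (fun p : ℝ × ℝ => f p.1 p.2)
      ((volume.restrict (Ioi (0:ℝ))).prod volume) := by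
    rw [hf]
    apply Measurable.aestronglyMeasurable
    fun_prop
  -- integrability on the product
  have hint : Integrable (Function.uncurry f) ((volume.restrict (Ioi (0:ℝ))).prod volume) := by
    have huf : Function.uncurry f = fun p : ℝ × ℝ => f p.1 p.2 := rfl
    rw [huf, integrable_prod_iff hmeas]
    constructor
    · filter_upwards [ae_restrict_mem measurableSet_Ioi] with u hu
      rw [mem_Ioi] at hu
      have : (fun x => f u x) = fun x =>
          (u ^ (s - 1) * Real.exp (-u)) * Real.exp (-u * x ^ 2) := funext (hsplit u hu)
      rw [show (fun x => f (u, x).1 (u, x).2) = fun x => f u x from rfl, this]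
      exact (integrable_exp_neg_mul_sq hu).const_mul _
    · apply Integrable.congr
        (g := fun u => ∫ x : ℝ, ‖f u x‖)
        (f := fun u => Real.sqrt π * (Real.exp (-u) * u ^ (s - 1 / 2 - 1)))
      · exact ((Real.GammaIntegral_convergent hs2).const_mul (Real.sqrt π))
      · filter_upwards [ae_restrict_mem measurableSet_Ioi] with u hu
        rw [mem_Ioi] at hu
        have hnorm : ∀ x : ℝ, ‖f u x‖ = f u x := by
          intro x
          rw [Real.norm_eq_abs, abs_of_nonneg]
          exact mul_nonneg (Real.rpow_nonneg hu.le _) (Real.exp_nonneg _)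
        show Real.sqrt π * (Real.exp (-u) * u ^ (s - 1 / 2 - 1)) = ∫ x : ℝ, ‖f u x‖
        simp_rw [hnorm]
        exact (inner u (mem_Ioi.mpr hu)).symm
  -- Fubini
  have swap := integral_integral_swap hint
  have hGpos : 0 < Real.Gamma s := Real.Gamma_pos_of_pos hs0
  have step : ∫ x : ℝ, (1 + x ^ 2) ^ (-s) * Real.Gamma s
      = Real.sqrt π * Real.Gamma (s - 1 / 2) := by
    calc ∫ x : ℝ, (1 + x ^ 2) ^ (-s) * Real.Gamma s
        = ∫ x : ℝ, ∫ u in Ioi (0:ℝ), f u x := by simp_rw [key]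
      _ = ∫ u in Ioi (0:ℝ), ∫ x : ℝ, f u x := swap.symm
      _ = ∫ u in Ioi (0:ℝ), Real.sqrt π * (Real.exp (-u) * u ^ (s - 1 / 2 - 1)) :=
          setIntegral_congr_fun measurableSet_Ioi inner
      _ = Real.sqrt π * ∫ u in Ioi (0:ℝ), Real.exp (-u) * u ^ (s - 1 / 2 - 1) :=
          integral_const_mul _ _
      _ = Real.sqrt π * Real.Gamma (s - 1 / 2) := by rw [← Real.Gamma_eq_integral hs2]
  rw [integral_mul_const] at step
  field_simp at step ⊢
  linarith [step]


/-- Marginal likelihood expression for the t-exponential family EP approximation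
(one-dimensional case). -/
theorem marginal_likelihood_texp (v μ σ t K Ψ gt c g₀ : ℝ)
    (hv : 0 < v) (hσ : 0 < σ)
    (ht : t = 1 + 2 / (v + 1))
    (hK : K = (v * σ ^ 2)⁻¹)
    (hΨ : Ψ = (Real.Gamma ((v + 1) / 2) /
        ((π * v) ^ ((1 : ℝ) / 2) * Real.Gamma (v / 2) * σ)) ^ (1 - t))
    (hgt : gt = -(Ψ / (1 - t)) * (K * μ ^ 2 + 1) + 1 / (1 - t))
    (hpos : 0 < 1 + (1 - t) * c - Ψ * K * μ ^ 2 - (1 - t) * g₀) :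
    (∫ w : ℝ, dexp t (c + (Ψ / (1 - t)) * (K * w ^ 2 - 2 * μ * K * w) - g₀))
      = dexp t (c / Ψ + gt / Ψ - g₀ / Ψ) ^ ((3 - t) / 2) := by
  have hv1 : (0:ℝ) < v + 1 := by linarith
  have hs : 1 / 2 < (v + 1) / 2 := by linarith
  have hδ : 1 - t = -(2 / (v + 1)) := by rw [ht]; ring
  have hδne : 1 - t ≠ 0 := by
    rw [hδ]; exact neg_ne_zero.mpr (div_pos two_pos hv1).ne'
  have hinv : 1 / (1 - t) = -((v + 1) / 2) := by
    rw [hδ]; field_simp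
  have hGv : 0 < Real.Gamma (v / 2) := Real.Gamma_pos_of_pos (by positivity)
  have hGv1 : 0 < Real.Gamma ((v + 1) / 2) := Real.Gamma_pos_of_pos (by positivity)
  have hπv : (0:ℝ) < (π * v) ^ ((1 : ℝ) / 2) :=
    Real.rpow_pos_of_pos (by positivity) _
  have hBpos : 0 < Real.Gamma ((v + 1) / 2) /
      ((π * v) ^ ((1 : ℝ) / 2) * Real.Gamma (v / 2) * σ) := by positivity
  have hΨpos : 0 < Ψ := by rw [hΨ]; exact Real.rpow_pos_of_pos hBpos _
  have hKpos : 0 < K := by rw [hK]; positivity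
  set A : ℝ := 1 + (1 - t) * c - Ψ * K * μ ^ 2 - (1 - t) * g₀ with hAdef
  have hA : 0 < A := hpos
  -- rewrite the integrand
  have hLHS : ∀ w : ℝ, dexp t (c + (Ψ / (1 - t)) * (K * w ^ 2 - 2 * μ * K * w) - g₀)
      = (A + Ψ * K * (w - μ) ^ 2) ^ (-((v + 1) / 2)) := by
    intro w
    rw [dexp, hinv]
    congr 1
    rw [hAdef]
    field_simp
    ring
  set b : ℝ := Real.sqrt (Ψ * K / A) with hbdef
  have hb : 0 < b := Real.sqrt_pos.mpr (by positivity)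
  have hb2 : b ^ 2 = Ψ * K / A := Real.sq_sqrt (by positivity)
  have hfact : ∀ w : ℝ, (A + Ψ * K * w ^ 2) ^ (-((v + 1) / 2))
      = A ^ (-((v + 1) / 2)) * (1 + (b * w) ^ 2) ^ (-((v + 1) / 2)) := by
    intro w
    rw [← Real.mul_rpow hA.le (by positivity)]
    congr 1
    have : (b * w) ^ 2 = b ^ 2 * w ^ 2 := by ring
    rw [this, hb2]
    field_simp
  -- compute the integral
  have hIL : (∫ w : ℝ, dexp t (c + (Ψ / (1 - t)) * (K * w ^ 2 - 2 * μ * K * w) - g₀))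
      = A ^ (-((v + 1) / 2)) * (b⁻¹ *
        (Real.sqrt π * Real.Gamma (v / 2) / Real.Gamma ((v + 1) / 2))) := by
    calc (∫ w : ℝ, dexp t (c + (Ψ / (1 - t)) * (K * w ^ 2 - 2 * μ * K * w) - g₀))
        = ∫ w : ℝ, (A + Ψ * K * (w - μ) ^ 2) ^ (-((v + 1) / 2)) := by simp_rw [hLHS]
      _ = ∫ w : ℝ, (A + Ψ * K * w ^ 2) ^ (-((v + 1) / 2)) :=
          integral_sub_right_eq_self (fun w => (A + Ψ * K * w ^ 2) ^ (-((v + 1) / 2))) μ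
      _ = ∫ w : ℝ, A ^ (-((v + 1) / 2)) * (1 + (b * w) ^ 2) ^ (-((v + 1) / 2)) := by
          simp_rw [hfact]
      _ = A ^ (-((v + 1) / 2)) * ∫ w : ℝ, (1 + (b * w) ^ 2) ^ (-((v + 1) / 2)) :=
          integral_const_mul _ _
      _ = A ^ (-((v + 1) / 2)) * (|b⁻¹| • ∫ x : ℝ, (1 + x ^ 2) ^ (-((v + 1) / 2))) := by
          rw [MeasureTheory.Measure.integral_comp_mul_left
            (fun x => (1 + x ^ 2) ^ (-((v + 1) / 2))) b]
      _ = A ^ (-((v + 1) / 2)) * (b⁻¹ *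
          (Real.sqrt π * Real.Gamma (v / 2) / Real.Gamma ((v + 1) / 2))) := by
          rw [student_integral hs, abs_of_pos (inv_pos.mpr hb), smul_eq_mul,
            show (v + 1) / 2 - 1 / 2 = v / 2 by ring]
  -- compute the right-hand side
  have hbase : 1 + (1 - t) * (c / Ψ + gt / Ψ - g₀ / Ψ) = A / Ψ := by
    rw [hgt, hAdef]
    field_simp
    ring
  have hAΨ : 0 < A / Ψ := div_pos hA hΨpos
  have hRHS : dexp t (c / Ψ + gt / Ψ - g₀ / Ψ) ^ ((3 - t) / 2)
      = (A / Ψ) ^ (-(v / 2)) := by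
    rw [dexp, hbase, hinv, ← Real.rpow_mul hAΨ.le]
    congr 1
    rw [ht]
    field_simp
    ring
  rw [hIL, hRHS]
  -- now pure rpow algebra
  have hΨs : Ψ ^ ((v + 1) / 2)
      = (π * v) ^ ((1 : ℝ) / 2) * Real.Gamma (v / 2) * σ / Real.Gamma ((v + 1) / 2) := by
    rw [hΨ, ← Real.rpow_mul hBpos.le,
      show (1 - t) * ((v + 1) / 2) = -1 by rw [ht]; field_simp; ring,
      Real.rpow_neg_one, inv_div]
  have hbinv : b⁻¹ = Real.sqrt A * (Real.sqrt Ψ)⁻¹ * (Real.sqrt v * σ) := by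
    rw [hbdef, ← Real.sqrt_inv]
    rw [show (Ψ * K / A)⁻¹ = A * Ψ⁻¹ * (v * σ ^ 2) by
      rw [hK]; field_simp]
    rw [Real.sqrt_mul (by positivity), Real.sqrt_mul hA.le, Real.sqrt_inv,
      Real.sqrt_mul hv.le, Real.sqrt_sq hσ.le]
  have hΨhalf : (Real.sqrt Ψ)⁻¹ = Ψ ^ (-(1 / 2) : ℝ) := by
    rw [Real.sqrt_eq_rpow, ← Real.rpow_neg hΨpos.le]
  have h1 : (A / Ψ) ^ (-(v / 2)) = A ^ (-(v / 2)) * Ψ ^ (v / 2) := by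
    rw [Real.div_rpow hA.le hΨpos.le, div_eq_mul_inv, ← Real.rpow_neg hΨpos.le, neg_neg]
  have h2 : Ψ ^ (v / 2) = Ψ ^ ((v + 1) / 2) * Ψ ^ (-(1 / 2) : ℝ) := by
    rw [← Real.rpow_add hΨpos]; congr 1; ring
  have h3 : ((π * v) ^ ((1 : ℝ) / 2)) = Real.sqrt π * Real.sqrt v := by
    rw [← Real.sqrt_eq_rpow, Real.sqrt_mul Real.pi_nonneg]
  have h5 : Real.sqrt A = A ^ ((1 : ℝ) / 2) := Real.sqrt_eq_rpow A
  have hApow : A ^ (-((v + 1) / 2)) * A ^ ((1 : ℝ) / 2) = A ^ (-(v / 2)) := by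
    rw [← Real.rpow_add hA]; congr 1; ring
  calc A ^ (-((v + 1) / 2)) * (b⁻¹ *
        (Real.sqrt π * Real.Gamma (v / 2) / Real.Gamma ((v + 1) / 2)))
      = (A ^ (-((v + 1) / 2)) * A ^ ((1 : ℝ) / 2)) *
        (Ψ ^ (-(1 / 2) : ℝ) *
          (Real.sqrt v * σ * Real.sqrt π * Real.Gamma (v / 2) / Real.Gamma ((v + 1) / 2))) := by
        rw [hbinv, hΨhalf, h5]; ring
    _ = A ^ (-(v / 2)) * (Ψ ^ ((v + 1) / 2) * Ψ ^ (-(1 / 2) : ℝ)) := by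
        rw [hApow, hΨs, h3]
        congr 1
        field_simp
    _ = A ^ (-(v / 2)) * Ψ ^ (v / 2) := by rw [← h2]
    _ = (A / Ψ) ^ (-(v / 2)) := h1.symm
end

section
/- Conditional distribution of the multivariate Student-t (Appendix E Lemma): let n₁, n₂ be positive integers, k = n₁ + n₂, v > 0, μ ∈ ℝ^k, and let Σ be a k×k real symmetric positive definite matrix, with block decomposition μ = (μ₁, μ₂) and Σ = [[Σ₁₁, Σ₁₂],[Σ₂₁, Σ₂₂]] according to the splitting ℝ^k = ℝ^{n₁} × ℝ^{n₂}. For x₁ ∈ ℝ^{n₁} define μ̃₂ = μ₂ + Σ₂₁Σ₁₁^{−1}(x₁−μ₁), Σ̃₂₂ = Σ₂₂ − Σ₂₁Σ₁₁^{−1}Σ₁₂, and β₁ = (x₁−μ₁)ᵀΣ₁₁^{−1}(x₁−μ₁). Then for every x₂ ∈ ℝ^{n₂}, St((x₁,x₂); v, μ, Σ) / St(x₁; v, μ₁, Σ₁₁) = St(x₂; v+n₁, μ̃₂, ((v+β₁)/(v+n₁)) Σ̃₂₂). -/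
open Real MeasureTheory Matrix

/-- The multivariate Student-t density with `v` degrees of freedom, location `μ`
and scale matrix `S`, on a finite index type `ι` (dimension `k = card ι`). -/
noncomputable def St {ι : Type*} [Fintype ι] [DecidableEq ι] (v : ℝ) (μ : ι → ℝ)
    (S : Matrix ι ι ℝ) (x : ι → ℝ) : ℝ :=
  Real.Gamma ((v + Fintype.card ι) / 2) /
      ((π * v) ^ ((Fintype.card ι : ℝ) / 2) * Real.Gamma (v / 2) *
        S.det ^ ((1 : ℝ) / 2)) *
    (1 + (x - μ) ⬝ᵥ ((v • S)⁻¹ *ᵥ (x - μ))) ^ (-(v + Fintype.card ι) / 2)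


private lemma log_piece (g X h Y Z e : ℝ) (hg : 0 < g) (hX : 0 < X) (hh : 0 < h)
    (hY : 0 < Y) (hZ : 0 < Z) :
    Real.log (g / (X * h * Y) * Z ^ e) =
      Real.log g - Real.log X - Real.log h - Real.log Y + e * Real.log Z := by
  rw [Real.log_mul (by positivity) (by positivity),
    Real.log_div (by positivity) (by positivity),
    Real.log_mul (by positivity) (by positivity),
    Real.log_mul (by positivity) (by positivity), Real.log_rpow hZ]
  ring

private lemma key (v k₁ k₂ β Q a s g h w : ℝ) (hv : 0 < v) (hk₁ : 0 < k₁) (hk₂ : 0 ≤ k₂)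
    (hβ : 0 ≤ β) (hQ : 0 ≤ Q) (ha : 0 < a) (hs : 0 < s)
    (hg : 0 < g) (hh : 0 < h) (hw : 0 < w) :
    g / ((π * v) ^ ((k₁ + k₂) / 2) * h * (a * s) ^ ((1:ℝ)/2)) *
        (1 + v⁻¹ * (β + Q)) ^ (-(v + k₁ + k₂) / 2) /
      (w / ((π * v) ^ (k₁ / 2) * h * a ^ ((1:ℝ)/2)) * (1 + v⁻¹ * β) ^ (-(v + k₁) / 2))
    = g / ((π * (v + k₁)) ^ (k₂ / 2) * w *
          (((v + β) / (v + k₁)) ^ k₂ * s) ^ ((1:ℝ)/2)) *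
        (1 + (v + β)⁻¹ * Q) ^ (-(v + k₁ + k₂) / 2) := by
  have hπ : 0 < π := pi_pos
  have hW : 0 < v + β := by linarith
  have hP : 0 < v + β + Q := by linarith
  have hV : 0 < v + k₁ := by linarith
  have e1 : 1 + v⁻¹ * (β + Q) = (v + β + Q) / v := by field_simp; ring
  have e2 : 1 + v⁻¹ * β = (v + β) / v := by field_simp
  have e3 : 1 + (v + β)⁻¹ * Q = (v + β + Q) / (v + β) := by
    field_simp
  rw [e1, e2, e3]
  have hL : 0 < g / ((π * v) ^ ((k₁ + k₂) / 2) * h * (a * s) ^ ((1:ℝ)/2)) *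
      ((v + β + Q) / v) ^ (-(v + k₁ + k₂) / 2) /
      (w / ((π * v) ^ (k₁ / 2) * h * a ^ ((1:ℝ)/2)) * ((v + β) / v) ^ (-(v + k₁) / 2)) := by
    positivity
  have hR : 0 < g / ((π * (v + k₁)) ^ (k₂ / 2) * w *
      (((v + β) / (v + k₁)) ^ k₂ * s) ^ ((1:ℝ)/2)) *
      ((v + β + Q) / (v + β)) ^ (-(v + k₁ + k₂) / 2) := by positivity
  rw [← Real.exp_log hL, ← Real.exp_log hR]
  congr 1
  rw [Real.log_div (by positivity) (by positivity),
    log_piece _ _ _ _ _ _ hg (by positivity) hh (by positivity) (by positivity),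
    log_piece _ _ _ _ _ _ hw (by positivity) hh (by positivity) (by positivity),
    log_piece _ _ _ _ _ _ hg (by positivity) hw (by positivity) (by positivity),
    Real.log_rpow (show (0:ℝ) < a from ha),
    Real.log_rpow (show (0:ℝ) < π * (v + k₁) by positivity),
    Real.log_rpow (show (0:ℝ) < ((v + β) / (v + k₁)) ^ k₂ * s by positivity),
    Real.log_mul (show ((v + β) / (v + k₁)) ^ k₂ ≠ 0 by positivity) hs.ne',
    Real.log_rpow (show (0:ℝ) < (v + β) / (v + k₁) by positivity),
    Real.log_mul hπ.ne' hV.ne',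
    Real.log_div hP.ne' hv.ne', Real.log_div hW.ne' hv.ne',
    Real.log_div hP.ne' hW.ne', Real.log_div hW.ne' hV.ne',
    Real.log_rpow (show (0:ℝ) < π * v by positivity),
    Real.log_rpow (show (0:ℝ) < π * v by positivity),
    Real.log_rpow (show (0:ℝ) < a * s by positivity),
    Real.log_mul hπ.ne' hv.ne', Real.log_mul ha.ne' hs.ne']
  ring


set_option maxHeartbeats 1000000 in
/-- Conditional distribution of the multivariate Student-t (Appendix E Lemma). -/
theorem studentT_conditional (n₁ n₂ : ℕ) (hn₁ : 0 < n₁) (hn₂ : 0 < n₂)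
    (v : ℝ) (hv : 0 < v) (μ : Fin n₁ ⊕ Fin n₂ → ℝ)
    (S : Matrix (Fin n₁ ⊕ Fin n₂) (Fin n₁ ⊕ Fin n₂) ℝ)
    (hS : S.IsSymm) (hSpd : S.PosDef)
    (x₁ : Fin n₁ → ℝ) (x₂ : Fin n₂ → ℝ) :
    St v μ S (Sum.elim x₁ x₂) / St v (μ ∘ Sum.inl) S.toBlocks₁₁ x₁
      = St (v + n₁)
          (μ ∘ Sum.inr + (S.toBlocks₂₁ * S.toBlocks₁₁⁻¹) *ᵥ (x₁ - μ ∘ Sum.inl))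
          (((v + (x₁ - μ ∘ Sum.inl) ⬝ᵥ (S.toBlocks₁₁⁻¹ *ᵥ (x₁ - μ ∘ Sum.inl))) / (v + n₁)) •
            (S.toBlocks₂₂ - S.toBlocks₂₁ * S.toBlocks₁₁⁻¹ * S.toBlocks₁₂))
          x₂ := by
  classical
  set A := S.toBlocks₁₁ with hA
  set B := S.toBlocks₁₂ with hB
  set C := S.toBlocks₂₁ with hCd
  set D := S.toBlocks₂₂ with hD
  have hSb : S = fromBlocks A B C D := (fromBlocks_toBlocks S).symm
  have hC : C = Bᵀ := by
    ext i j
    exact (congrFun (congrFun hS (Sum.inr i)) (Sum.inl j)).symm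
  have hBH : Bᴴ = C := by rw [conjTranspose_eq_transpose_of_trivial, hC]
  have hSb' : S = fromBlocks A B Bᴴ D := by rw [hSb, hBH]
  have hA_sym : A.IsHermitian := by
    rw [Matrix.IsHermitian, conjTranspose_eq_transpose_of_trivial]
    ext i j
    exact congrFun (congrFun hS (Sum.inl i)) (Sum.inl j)
  have hA_pd : A.PosDef := by
    refine PosDef.of_dotProduct_mulVec_pos hA_sym (fun ⦃y⦄ hy => ?_)
    have h0 : (Sum.elim y (0 : Fin n₂ → ℝ)) ≠ 0 := by
      intro h
      exact hy (funext fun i => congrFun h (Sum.inl i))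
    have := hSpd.dotProduct_mulVec_pos h0
    simpa [hSb, star_trivial, fromBlocks_mulVec] using this
  haveI : Invertible A := A.invertibleOfIsUnitDet hA_pd.det_pos.ne'.isUnit
  set Sc := D - C * A⁻¹ * B with hSc
  have hSch_herm : Sc.IsHermitian := by
    have := (Matrix.IsHermitian.fromBlocks₁₁ B D hA_sym).mp (hSb' ▸ hSpd.1)
    rwa [hBH] at this
  have hSch_pd : Sc.PosDef := by
    refine PosDef.of_dotProduct_mulVec_pos hSch_herm (fun ⦃y⦄ hy => ?_)
    have h0 : (Sum.elim (-((A⁻¹ * B) *ᵥ y)) y) ≠ 0 := by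
      intro h
      exact hy (funext fun i => congrFun h (Sum.inr i))
    have hpos := hSpd.dotProduct_mulVec_pos h0
    rw [dotProduct_mulVec, hSb', schur_complement_eq₁₁ B D _ _ hA_sym] at hpos
    rw [neg_add_cancel, star_zero, zero_vecMul, zero_dotProduct, zero_add, hBH] at hpos
    rwa [dotProduct_mulVec]
  haveI : Invertible Sc := Sc.invertibleOfIsUnitDet hSch_pd.det_pos.ne'.isUnit
  have hAdet : IsUnit A.det := hA_pd.det_pos.ne'.isUnit
  have hScdet : IsUnit Sc.det := hSch_pd.det_pos.ne'.isUnit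
  have hdet : S.det = A.det * Sc.det := by
    rw [hSb, det_fromBlocks₁₁, invOf_eq_nonsing_inv]
  set d₁ := x₁ - μ ∘ Sum.inl with hd₁
  set d₂ := x₂ - μ ∘ Sum.inr with hd₂
  set e₂ := d₂ - (C * A⁻¹) *ᵥ d₁ with he₂
  set w₂ := Sc⁻¹ *ᵥ e₂ with hw₂
  set w₁ := A⁻¹ *ᵥ d₁ - A⁻¹ *ᵥ (B *ᵥ w₂) with hw₁
  clear_value d₁ d₂ e₂ w₂ w₁
  have hScw : Sc *ᵥ w₂ = e₂ := by
    rw [hw₂, mulVec_mulVec, Matrix.mul_nonsing_inv _ hScdet, one_mulVec]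
  have hAA : ∀ z : Fin n₁ → ℝ, A *ᵥ (A⁻¹ *ᵥ z) = z := fun z => by
    rw [mulVec_mulVec, Matrix.mul_nonsing_inv _ hAdet, one_mulVec]
  have htop : A *ᵥ w₁ + B *ᵥ w₂ = d₁ := by
    rw [hw₁, mulVec_sub, hAA, hAA, sub_add_cancel]
  have hbot : C *ᵥ w₁ + D *ᵥ w₂ = d₂ := by
    have h2 : C *ᵥ w₁ + D *ᵥ w₂ = (C * A⁻¹) *ᵥ d₁ + Sc *ᵥ w₂ := by
      rw [hw₁, hSc, mulVec_sub, sub_mulVec, mulVec_mulVec, mulVec_mulVec,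
        mulVec_mulVec]
      abel
    rw [h2, hScw, he₂, add_sub_cancel]
  have hSw : S *ᵥ Sum.elim w₁ w₂ = Sum.elim d₁ d₂ := by
    rw [hSb, fromBlocks_mulVec, Sum.elim_comp_inl, Sum.elim_comp_inr, htop, hbot]
  have hinv : S⁻¹ *ᵥ Sum.elim d₁ d₂ = Sum.elim w₁ w₂ := by
    rw [← hSw, mulVec_mulVec, Matrix.nonsing_inv_mul _ hSpd.det_pos.ne'.isUnit, one_mulVec]
  have hAinvsym : (A⁻¹)ᵀ = A⁻¹ := by
    have := hA_sym.inv
    rwa [Matrix.IsHermitian, conjTranspose_eq_transpose_of_trivial] at this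
  have hcross : d₁ ⬝ᵥ (A⁻¹ *ᵥ (B *ᵥ w₂)) = ((C * A⁻¹) *ᵥ d₁) ⬝ᵥ w₂ := by
    rw [mulVec_mulVec, dotProduct_mulVec, ← mulVec_transpose, transpose_mul, hAinvsym, ← hC]
  have hquad : Sum.elim d₁ d₂ ⬝ᵥ (S⁻¹ *ᵥ Sum.elim d₁ d₂)
      = d₁ ⬝ᵥ (A⁻¹ *ᵥ d₁) + e₂ ⬝ᵥ (Sc⁻¹ *ᵥ e₂) := by
    rw [hinv, sumElim_dotProduct_sumElim, ← hw₂, hw₁, dotProduct_sub, hcross,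
      he₂, sub_dotProduct]
    ring
  -- scalar quantities
  set β := d₁ ⬝ᵥ (A⁻¹ *ᵥ d₁) with hβd
  set Q := e₂ ⬝ᵥ (Sc⁻¹ *ᵥ e₂) with hQd
  have hβ : 0 ≤ β := by simpa [hβd] using hA_pd.inv.posSemidef.dotProduct_mulVec_nonneg d₁
  have hQ : 0 ≤ Q := by simpa [hQd] using hSch_pd.inv.posSemidef.dotProduct_mulVec_nonneg e₂
  have hvn : (0:ℝ) < v + n₁ := by positivity
  have hvβ : (0:ℝ) < v + β := by linarith
  haveI : Invertible v := invertibleOfNonzero hv.ne'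
  haveI : Invertible (v + β) := invertibleOfNonzero hvβ.ne'
  have hsub : Sum.elim x₁ x₂ - μ = Sum.elim d₁ d₂ := by
    rw [hd₁, hd₂]; funext i; cases i <;> simp
  have hsub1 : x₁ - μ ∘ Sum.inl = d₁ := hd₁.symm
  have hsub2 : x₂ - (μ ∘ Sum.inr + (C * A⁻¹) *ᵥ d₁) = e₂ := by
    rw [he₂, hd₂, sub_add_eq_sub_sub]
  have hq1 : Sum.elim d₁ d₂ ⬝ᵥ ((v • S)⁻¹ *ᵥ Sum.elim d₁ d₂) = v⁻¹ * (β + Q) := by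
    rw [Matrix.inv_smul (A := S) (k := v) hSpd.det_pos.ne'.isUnit, invOf_eq_inv, smul_mulVec,
      dotProduct_smul, hquad, smul_eq_mul]
  have hq2 : d₁ ⬝ᵥ ((v • A)⁻¹ *ᵥ d₁) = v⁻¹ * β := by
    rw [Matrix.inv_smul (A := A) (k := v) hAdet, invOf_eq_inv, smul_mulVec,
      dotProduct_smul, smul_eq_mul, hβd]
  have hsmul : (v + (n₁:ℝ)) • (((v + β) / (v + (n₁:ℝ))) • Sc) = (v + β) • Sc := by
    rw [smul_smul, mul_div_cancel₀ _ hvn.ne']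
  have hq3 : e₂ ⬝ᵥ (((v + (n₁:ℝ)) • (((v + β) / (v + (n₁:ℝ))) • Sc))⁻¹ *ᵥ e₂)
      = (v + β)⁻¹ * Q := by
    rw [hsmul, Matrix.inv_smul (A := Sc) (k := v + β) hScdet, invOf_eq_inv, smul_mulVec,
      dotProduct_smul, smul_eq_mul, hQd]
  have hdet2 : (((v + β) / (v + (n₁:ℝ))) • Sc).det
      = ((v + β) / (v + (n₁:ℝ))) ^ ((n₂:ℝ)) * Sc.det := by
    rw [det_smul, Fintype.card_fin, Real.rpow_natCast]
  unfold St
  simp only [Fintype.card_sum, Fintype.card_fin]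
  push_cast
  rw [hsub, hsub2, hq1, hsub1, hq2, hq3, hdet, hdet2]
  have hcast : (v + ((n₁:ℝ) + (n₂:ℝ))) = v + (n₁:ℝ) + (n₂:ℝ) := by ring
  rw [hcast]
  exact key v _ _ β Q A.det Sc.det _ _ _ hv (by positivity) (by positivity) hβ hQ
    hA_pd.det_pos hSch_pd.det_pos (Real.Gamma_pos_of_pos (by positivity))
    (Real.Gamma_pos_of_pos (by positivity)) (Real.Gamma_pos_of_pos (by positivity))
end
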